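/- Let f = (u, v, s, t) : ℝ⁴ → ℝ⁴ be a smooth map satisfying at every point the system u_x = −v_y = u_z = −v_w, v_x = u_y = v_z = u_w, s_x = −t_y = s_z = −t_w, t_x = s_y = t_z = s_w. Then at every point p, the graph Γ_f has equal Kähler angles with cos²θ(p) = [(s_x − u_z)² + (s_y − u_w)²] / [1 + 2(u_x² + u_y² + s_x² + s_y²)] (all partials at p). Moreover cos²θ(p) < 1 for every p, so Γ_f has no J₀-complex points; and if (s_x − u_z)² + (s_y − u_w)² ≤ K on all of ℝ⁴, then cos²θ ≤ K/(1+K) < 1 on all of ℝ⁴. -/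

import Mathlib

/-!
STATEMENT 5: If `f = (u,v,s,t) : ℝ⁴ → ℝ⁴` is smooth and satisfies everywhere
`u_x = −v_y = u_z = −v_w`, `v_x = u_y = v_z = u_w`,
`s_x = −t_y = s_z = −t_w`, `t_x = s_y = t_z = s_w`,
then at every `p` the graph has equal Kähler angles with
`cos²θ(p) = [(s_x − u_z)² + (s_y − u_w)²] / [1 + 2(u_x² + u_y² + s_x² + s_y²)]`,
`cos²θ(p) < 1` everywhere (no `J₀`-complex points), and if the numerator is
bounded by `K` on ℝ⁴ then `cos²θ ≤ K/(1+K) < 1` everywhere.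
-/

open scoped RealInnerProductSpace

noncomputable section

abbrev E4 : Type := EuclideanSpace ℝ (Fin 4)

noncomputable def e (j : Fin 4) : E4 := EuclideanSpace.single j (1 : ℝ)

noncomputable def Sp (f : E4 → E4) (p : E4) : E4 →L[ℝ] E4 :=
  Ring.inverse (1 + ContinuousLinearMap.adjoint (fderiv ℝ f p) * fderiv ℝ f p) *
    (ContinuousLinearMap.adjoint (fderiv ℝ f p) - fderiv ℝ f p)

/-- the claimed value of `cos²θ` at `p` -/
noncomputable def cos2 (f : E4 → E4) (p : E4) : ℝ :=
  ((fderiv ℝ f p (e 0) 2 - fderiv ℝ f p (e 2) 0) ^ 2 +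
    (fderiv ℝ f p (e 1) 2 - fderiv ℝ f p (e 3) 0) ^ 2) /
  (1 + 2 * ((fderiv ℝ f p (e 0) 0) ^ 2 + (fderiv ℝ f p (e 1) 0) ^ 2 +
    (fderiv ℝ f p (e 0) 2) ^ 2 + (fderiv ℝ f p (e 1) 2) ^ 2))

set_option maxHeartbeats 1000000

namespace Stmt5Aux

def Mm (a b c d : ℝ) : Matrix (Fin 4) (Fin 4) ℝ :=
  !![a,b,a,b; b,-a,b,-a; c,d,c,d; d,-c,d,-c]

def Mt (a b c d : ℝ) : Matrix (Fin 4) (Fin 4) ℝ :=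
  !![a,b,c,d; b,-a,d,-c; a,b,c,d; b,-a,d,-c]

def Km (q : ℝ) : Matrix (Fin 4) (Fin 4) ℝ :=
  !![1+q,0,-q,0; 0,1+q,0,-q; -q,0,1+q,0; 0,-q,0,1+q]

def Nm (q r : ℝ) : Matrix (Fin 4) (Fin 4) ℝ := (1/r) • Km q

lemma star_Mm (a b c d : ℝ) : star (Mm a b c d) = Mt a b c d := by
  ext i j
  fin_cases i <;> fin_cases j <;>
    simp [Mm, Mt, Matrix.star_eq_conjTranspose, Matrix.conjTranspose_apply]

lemma A_mul_K (a b c d : ℝ) :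
    (1 + Mt a b c d * Mm a b c d) * Km (a^2+b^2+c^2+d^2) =
      (1+2*(a^2+b^2+c^2+d^2)) • 1 := by
  ext i j
  fin_cases i <;> fin_cases j <;>
    · simp [Mm, Mt, Km, Matrix.mul_apply, Fin.sum_univ_four, Matrix.one_apply,
        Matrix.add_apply, Matrix.smul_apply]
      ring

lemma K_mul_A (a b c d : ℝ) :
    Km (a^2+b^2+c^2+d^2) * (1 + Mt a b c d * Mm a b c d) =
      (1+2*(a^2+b^2+c^2+d^2)) • 1 := by
  ext i j
  fin_cases i <;> fin_cases j <;>
    · simp [Mm, Mt, Km, Matrix.mul_apply, Fin.sum_univ_four, Matrix.one_apply,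
        Matrix.add_apply, Matrix.smul_apply]
      ring

lemma KB_sq (a b c d : ℝ) :
    (Km (a^2+b^2+c^2+d^2) * (Mt a b c d - Mm a b c d)) *
    (Km (a^2+b^2+c^2+d^2) * (Mt a b c d - Mm a b c d)) =
      (-((1+2*(a^2+b^2+c^2+d^2)) * ((c-a)^2+(d-b)^2))) • 1 := by
  ext i j
  fin_cases i <;> fin_cases j <;>
    · simp [Mm, Mt, Km, Matrix.mul_apply, Fin.sum_univ_four, Matrix.one_apply,
        Matrix.sub_apply, Matrix.smul_apply]
      ring

lemma mul_N (a b c d : ℝ) :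
    (1 + Mt a b c d * Mm a b c d) *
      Nm (a^2+b^2+c^2+d^2) (1+2*(a^2+b^2+c^2+d^2)) = 1 := by
  have hr : (1+2*(a^2+b^2+c^2+d^2)) ≠ 0 := by positivity
  rw [Nm, mul_smul_comm, A_mul_K, smul_smul, one_div, inv_mul_cancel₀ hr, one_smul]

lemma N_mul (a b c d : ℝ) :
    Nm (a^2+b^2+c^2+d^2) (1+2*(a^2+b^2+c^2+d^2)) *
      (1 + Mt a b c d * Mm a b c d) = 1 := by
  have hr : (1+2*(a^2+b^2+c^2+d^2)) ≠ 0 := by positivity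
  rw [Nm, smul_mul_assoc, K_mul_A, smul_smul, one_div, inv_mul_cancel₀ hr, one_smul]

lemma sq_eq (a b c d : ℝ) :
    (Nm (a^2+b^2+c^2+d^2) (1+2*(a^2+b^2+c^2+d^2)) * (Mt a b c d - Mm a b c d)) *
    (Nm (a^2+b^2+c^2+d^2) (1+2*(a^2+b^2+c^2+d^2)) * (Mt a b c d - Mm a b c d)) =
      -(((c-a)^2+(d-b)^2)/(1+2*(a^2+b^2+c^2+d^2))) • 1 := by
  have hr : (1+2*(a^2+b^2+c^2+d^2)) ≠ 0 := by positivity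
  rw [Nm, smul_mul_assoc, smul_mul_assoc, mul_smul_comm, KB_sq, smul_smul, smul_smul]
  congr 1
  field_simp


lemma toECLM_e (M : Matrix (Fin 4) (Fin 4) ℝ) (j i : Fin 4) :
    Matrix.toEuclideanCLM (𝕜 := ℝ) M (e j) i = M i j := by
  have h : e j = (WithLp.equiv 2 (Fin 4 → ℝ)).symm (Pi.single j 1) := rfl
  rw [h]
  simp [Matrix.mulVec_single]

end Stmt5Aux

open Stmt5Aux

theorem stmt_5 (f : E4 → E4) (hsmooth : ContDiff ℝ (⊤ : ℕ∞) f)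
    (hsys : ∀ p : E4,
      (fderiv ℝ f p (e 0) 0 = -(fderiv ℝ f p (e 1) 1) ∧
        fderiv ℝ f p (e 0) 0 = fderiv ℝ f p (e 2) 0 ∧
        fderiv ℝ f p (e 0) 0 = -(fderiv ℝ f p (e 3) 1)) ∧
      (fderiv ℝ f p (e 0) 1 = fderiv ℝ f p (e 1) 0 ∧
        fderiv ℝ f p (e 0) 1 = fderiv ℝ f p (e 2) 1 ∧
        fderiv ℝ f p (e 0) 1 = fderiv ℝ f p (e 3) 0) ∧
      (fderiv ℝ f p (e 0) 2 = -(fderiv ℝ f p (e 1) 3) ∧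
        fderiv ℝ f p (e 0) 2 = fderiv ℝ f p (e 2) 2 ∧
        fderiv ℝ f p (e 0) 2 = -(fderiv ℝ f p (e 3) 3)) ∧
      (fderiv ℝ f p (e 0) 3 = fderiv ℝ f p (e 1) 2 ∧
        fderiv ℝ f p (e 0) 3 = fderiv ℝ f p (e 2) 3 ∧
        fderiv ℝ f p (e 0) 3 = fderiv ℝ f p (e 3) 2)) :
    (∀ p : E4, Sp f p * Sp f p = -(cos2 f p) • 1) ∧
    (∀ p : E4, cos2 f p < 1) ∧
    (∀ p : E4, fderiv ℝ f p * fderiv ℝ f p ≠ -1) ∧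
    (∀ K : ℝ,
      (∀ p : E4, (fderiv ℝ f p (e 0) 2 - fderiv ℝ f p (e 2) 0) ^ 2 +
        (fderiv ℝ f p (e 1) 2 - fderiv ℝ f p (e 3) 0) ^ 2 ≤ K) →
      (∀ p : E4, cos2 f p ≤ K / (1 + K)) ∧ K / (1 + K) < 1) := by
  -- notation
  set Φ := Matrix.toEuclideanCLM (𝕜 := ℝ) (n := Fin 4) with hΦ
  have key : ∀ p : E4, fderiv ℝ f p =
      Φ (Mm (fderiv ℝ f p (e 0) 0) (fderiv ℝ f p (e 0) 1)
          (fderiv ℝ f p (e 0) 2) (fderiv ℝ f p (e 0) 3)) := by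
    intro p
    obtain ⟨⟨h1, h2, h3⟩, ⟨h4, h5, h6⟩, ⟨h7, h8, h9⟩, ⟨h10, h11, h12⟩⟩ := hsys p
    refine ContinuousLinearMap.coe_injective
      (Module.Basis.ext (EuclideanSpace.basisFun (Fin 4) ℝ).toBasis ?_)
    intro j
    have hb : ((EuclideanSpace.basisFun (Fin 4) ℝ).toBasis j : E4) = e j := by
      simp [e, OrthonormalBasis.coe_toBasis, EuclideanSpace.basisFun_apply]
    rw [hb]
    show fderiv ℝ f p (e j) = Φ _ (e j)
    ext i
    rw [hΦ, toECLM_e]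
    fin_cases j <;> fin_cases i <;> simp [Mm] <;> linarith
  have hcos : ∀ p : E4, cos2 f p =
      ((fderiv ℝ f p (e 0) 2 - fderiv ℝ f p (e 0) 0) ^ 2 +
        (fderiv ℝ f p (e 0) 3 - fderiv ℝ f p (e 0) 1) ^ 2) /
      (1 + 2 * ((fderiv ℝ f p (e 0) 0) ^ 2 + (fderiv ℝ f p (e 0) 1) ^ 2 +
        (fderiv ℝ f p (e 0) 2) ^ 2 + (fderiv ℝ f p (e 0) 3) ^ 2)) := by
    intro p
    obtain ⟨⟨h1, h2, h3⟩, ⟨h4, h5, h6⟩, ⟨h7, h8, h9⟩, ⟨h10, h11, h12⟩⟩ := hsys p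
    unfold cos2
    rw [← h2, ← h6, ← h10, ← h4]
  refine ⟨?_, ?_, ?_, ?_⟩
  · -- part 1
    intro p
    set a := fderiv ℝ f p (e 0) 0
    set b := fderiv ℝ f p (e 0) 1
    set c := fderiv ℝ f p (e 0) 2
    set d := fderiv ℝ f p (e 0) 3
    have hA := key p
    have hadj : ContinuousLinearMap.adjoint (fderiv ℝ f p) = Φ (Mt a b c d) := by
      rw [hA, ← ContinuousLinearMap.star_eq_adjoint, ← map_star, star_Mm]
    have hunit : Ring.inverse (1 + ContinuousLinearMap.adjoint (fderiv ℝ f p) * fderiv ℝ f p)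
        = Φ (Nm (a^2+b^2+c^2+d^2) (1+2*(a^2+b^2+c^2+d^2))) := by
      rw [hadj, hA, ← map_mul, ← map_one Φ, ← map_add]
      refine Ring.inverse_unit
        ⟨Φ (1 + Mt a b c d * Mm a b c d),
          Φ (Nm (a^2+b^2+c^2+d^2) (1+2*(a^2+b^2+c^2+d^2))),
          by rw [← map_mul, mul_N, map_one], by rw [← map_mul, N_mul, map_one]⟩
    have hSp : Sp f p = Φ (Nm (a^2+b^2+c^2+d^2) (1+2*(a^2+b^2+c^2+d^2)) *
        (Mt a b c d - Mm a b c d)) := by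
      unfold Sp
      rw [hunit, hadj, hA, ← map_sub, ← map_mul]
    rw [hSp, ← map_mul, sq_eq, map_smul, map_one, hcos p]
  · -- part 2
    intro p
    rw [hcos p]
    set a := fderiv ℝ f p (e 0) 0
    set b := fderiv ℝ f p (e 0) 1
    set c := fderiv ℝ f p (e 0) 2
    set d := fderiv ℝ f p (e 0) 3
    have hr : (0:ℝ) < 1 + 2*(a^2+b^2+c^2+d^2) := by positivity
    rw [div_lt_one (by nlinarith)]
    nlinarith [sq_nonneg (c+a), sq_nonneg (d+b)]
  · -- part 3
    intro p h
    set a := fderiv ℝ f p (e 0) 0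
    set b := fderiv ℝ f p (e 0) 1
    set c := fderiv ℝ f p (e 0) 2
    set d := fderiv ℝ f p (e 0) 3
    rw [key p, ← map_mul] at h
    have h1 : (-1 : E4 →L[ℝ] E4) = Φ (-1) := by rw [map_neg, map_one]
    rw [h1] at h
    have h2 : Mm a b c d * Mm a b c d = -1 :=
      (Matrix.toEuclideanCLM (𝕜 := ℝ) (n := Fin 4)).injective h
    have e1 : (Mm a b c d * Mm a b c d) 0 0 = (-1 : Matrix (Fin 4) (Fin 4) ℝ) 0 0 := by
      rw [h2]
    have e2 : (Mm a b c d * Mm a b c d) 2 0 = (-1 : Matrix (Fin 4) (Fin 4) ℝ) 2 0 := by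
      rw [h2]
    simp [Mm, Matrix.mul_apply, Fin.sum_univ_four, Matrix.one_apply] at e1 e2
    nlinarith [sq_nonneg (a+c), sq_nonneg (b+d), e1, e2]
  · -- part 4
    intro K hK
    have hK0 : 0 ≤ K := le_trans (by positivity) (hK 0)
    constructor
    · intro p
      rw [hcos p]
      obtain ⟨⟨h1, h2, h3⟩, ⟨h4, h5, h6⟩, ⟨h7, h8, h9⟩, ⟨h10, h11, h12⟩⟩ := hsys p
      have hn := hK p
      rw [← h2, ← h6, ← h10] at hn
      set a := fderiv ℝ f p (e 0) 0
      set b := fderiv ℝ f p (e 0) 1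
      set c := fderiv ℝ f p (e 0) 2
      set d := fderiv ℝ f p (e 0) 3
      rw [div_le_div_iff₀ (by positivity) (by positivity)]
      nlinarith [sq_nonneg (c+a), sq_nonneg (d+b), sq_nonneg (c-a), sq_nonneg (d-b)]
    · rw [div_lt_one (by positivity)]
      linarith

end
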